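/- arXiv:1706.03097 — 3 statements merged into one kernel-verified Lean document; each statement's English description precedes it below -/
import Mathlib

section
/- Soundness of the label dominance rule: let V be a finite vertex set, c̄ : V × V → ℝ reduced arc costs, q : V → ℝ≥0 demands, Q > 0 a capacity, and NG : V → Set V neighborhood sets; labels are updated along an extension by vertex j via cost ↦ cost + c̄(last, j), load ↦ load + q(j), memory ↦ (memory ∩ NG(j)) ∪ {j}, and an extension by j from a label is feasible iff j is not in the label's memory and the new load does not exceed Q. Suppose labels L₁ = (v, c̄₁, q₁, Π₁) and L₂ = (v, c̄₂, q₂, Π₂) have the same last vertex v, with c̄₁ ≤ c̄₂, q₁ ≤ q₂, and Π₁ ⊆ Π₂. Then for every finite sequence of vertices (w₁, …, w_s) whose successive extensions from L₂ are all feasible, the successive extensions of L₁ by the same sequence are also all feasible, and the resulting labels satisfy componentwise: cost of the extension of L₁ ≤ cost of the extension of L₂, load ≤ load, and memory ⊆ memory. -/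
/-- A label of the ng-route dynamic program: last vertex, accumulated reduced cost,
accumulated load, and memory set. -/
structure NgLabel (V : Type*) where
  last : V
  cost : ℝ
  load : ℝ
  mem : Set V

/-- Extension of a label along vertex `j`. -/
def NgLabel.extend {V : Type*} (cbar : V → V → ℝ) (q : V → ℝ) (NG : V → Set V)
    (L : NgLabel V) (j : V) : NgLabel V :=
  ⟨j, L.cost + cbar L.last j, L.load + q j, (L.mem ∩ NG j) ∪ {j}⟩

/-- Extension of a label along a sequence of vertices. -/
def NgLabel.extendSeq {V : Type*} (cbar : V → V → ℝ) (q : V → ℝ) (NG : V → Set V)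
    (L : NgLabel V) (ws : List V) : NgLabel V :=
  ws.foldl (NgLabel.extend cbar q NG) L

/-- Feasibility of the successive extensions of a label along a sequence of vertices:
each vertex must not be in the current memory, and the load must stay within `Q`. -/
def NgLabel.FeasSeq {V : Type*} (cbar : V → V → ℝ) (q : V → ℝ) (NG : V → Set V)
    (Q : ℝ) (L : NgLabel V) : List V → Prop
  | [] => True
  | j :: ws => (j ∉ L.mem ∧ L.load + q j ≤ Q) ∧
      NgLabel.FeasSeq cbar q NG Q (L.extend cbar q NG j) ws

/-- Soundness of the label dominance rule: if `L₁` dominates `L₂`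
(same last vertex, smaller cost, smaller load, smaller memory), then every
sequence of extensions feasible from `L₂` is feasible from `L₁`, and the
resulting labels compare componentwise. -/
theorem ng_dominance_sound {V : Type*} (cbar : V → V → ℝ) (q : V → ℝ)
    (hq : ∀ v, 0 ≤ q v) (Q : ℝ) (hQ : 0 < Q) (NG : V → Set V)
    (L₁ L₂ : NgLabel V) (hlast : L₁.last = L₂.last)
    (hcost : L₁.cost ≤ L₂.cost) (hload : L₁.load ≤ L₂.load)
    (hmem : L₁.mem ⊆ L₂.mem) :
    ∀ ws : List V, NgLabel.FeasSeq cbar q NG Q L₂ ws →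
      NgLabel.FeasSeq cbar q NG Q L₁ ws ∧
      (L₁.extendSeq cbar q NG ws).cost ≤ (L₂.extendSeq cbar q NG ws).cost ∧
      (L₁.extendSeq cbar q NG ws).load ≤ (L₂.extendSeq cbar q NG ws).load ∧
      (L₁.extendSeq cbar q NG ws).mem ⊆ (L₂.extendSeq cbar q NG ws).mem := by
  intro ws
  induction ws generalizing L₁ L₂ with
  | nil => intro _; exact ⟨trivial, hcost, hload, hmem⟩
  | cons j ws ih =>
    rintro ⟨⟨hj, hld⟩, hfeas⟩
    have hmem' : (L₁.extend cbar q NG j).mem ⊆ (L₂.extend cbar q NG j).mem := by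
      intro x hx
      rcases hx with ⟨hx1, hx2⟩ | hx
      · exact Or.inl ⟨hmem hx1, hx2⟩
      · exact Or.inr hx
    have hcost' : (L₁.extend cbar q NG j).cost ≤ (L₂.extend cbar q NG j).cost := by
      simp only [NgLabel.extend, hlast]; linarith
    have hload' : (L₁.extend cbar q NG j).load ≤ (L₂.extend cbar q NG j).load := by
      simp only [NgLabel.extend]; linarith
    obtain ⟨h1, h2, h3, h4⟩ := ih (L₁.extend cbar q NG j) (L₂.extend cbar q NG j)
      rfl hcost' hload' hmem' hfeas
    exact ⟨⟨⟨fun h => hj (hmem h), by linarith⟩, h1⟩, h2, h3, h4⟩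
end

section
/- Lower bound on the number of routes serving a group: let V_k be a finite set with demands q_i ≥ 0 and weights s_i ≥ 0 for i ∈ V_k, let α be a real number, Q > 0, and define Z = min{ ∑_{i∈T} q_i : T ⊆ V_k, ∑_{i∈T} s_i ≥ α·∑_{i∈V_k} s_i }, assuming this set of subsets T is nonempty. If R₁, …, R_m are pairwise disjoint subsets of V_k such that ∑_{i∈R_j} q_i ≤ Q for every j and the union U = R₁ ∪ ⋯ ∪ R_m satisfies ∑_{i∈U} s_i ≥ α·∑_{i∈V_k} s_i, then m ≥ ⌈Z/Q⌉. -/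
open Finset Function

theorem Finset.sum_biUnion_le_card_nsmul {ι κ M : Type*} [DecidableEq ι] [Fintype κ]
    [AddCommMonoid M] [PartialOrder M] [IsOrderedAddMonoid M]
    {R : κ → Finset ι} (hR : Pairwise (Disjoint on R)) {f : ι → M} {Q : M}
    (hcap : ∀ j, ∑ i ∈ R j, f i ≤ Q) :
    ∑ i ∈ univ.biUnion R, f i ≤ Fintype.card κ • Q := by
  rw [sum_biUnion (hR.set_pairwise _)]
  exact sum_le_card_nsmul _ _ _ fun j _ => hcap j

theorem Int.ceil_div_le_of_le_mul {K : Type*} [Field K] [LinearOrder K] [IsStrictOrderedRing K]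
    [FloorRing K] {Z Q : K} (hQ : 0 < Q) {m : ℤ} (h : Z ≤ m * Q) :
    ⌈Z / Q⌉ ≤ m :=
  Int.ceil_le.mpr ((div_le_iff₀ hQ).mpr h)

theorem routes_lower_bound_general {ι : Type*} [DecidableEq ι] (Vk : Finset ι)
    (q s : ι → ℝ)
    (α : ℝ) (Q : ℝ) (hQ : 0 < Q) (Z : ℝ)
    (hZ : IsLeast {x : ℝ | ∃ T ⊆ Vk,
        α * ∑ i ∈ Vk, s i ≤ ∑ i ∈ T, s i ∧ x = ∑ i ∈ T, q i} Z)
    (m : ℕ) (R : Fin m → Finset ι) (hRsub : ∀ j, R j ⊆ Vk)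
    (hdisj : ∀ j j', j ≠ j' → Disjoint (R j) (R j'))
    (hcap : ∀ j, ∑ i ∈ R j, q i ≤ Q)
    (hserv : α * ∑ i ∈ Vk, s i ≤ ∑ i ∈ Finset.univ.biUnion R, s i) :
    ⌈Z / Q⌉ ≤ (m : ℤ) := by
  have hUsub : univ.biUnion R ⊆ Vk := biUnion_subset.mpr fun j _ => hRsub j
  have hZle : Z ≤ ∑ i ∈ univ.biUnion R, q i := hZ.2 ⟨_, hUsub, hserv, rfl⟩
  have hUcap : ∑ i ∈ univ.biUnion R, q i ≤ m * Q := by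
    simpa using sum_biUnion_le_card_nsmul hdisj hcap
  exact Int.ceil_div_le_of_le_mul hQ (mod_cast hZle.trans hUcap)

/-- Lower bound on the number of routes serving a group: if `Z` is the minimum total
demand of a subset of `Vk` whose total weight attains the service level
`α * ∑ i in Vk, s i`, and pairwise disjoint capacity-feasible route intersections
`R 1, …, R m ⊆ Vk` jointly attain the service level, then `m ≥ ⌈Z / Q⌉`. -/
theorem routes_lower_bound {ι : Type*} [DecidableEq ι] (Vk : Finset ι)
    (q s : ι → ℝ) (hq : ∀ i ∈ Vk, 0 ≤ q i) (hs : ∀ i ∈ Vk, 0 ≤ s i)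
    (α : ℝ) (Q : ℝ) (hQ : 0 < Q) (Z : ℝ)
    (hZ : IsLeast {x : ℝ | ∃ T ⊆ Vk,
        α * ∑ i ∈ Vk, s i ≤ ∑ i ∈ T, s i ∧ x = ∑ i ∈ T, q i} Z)
    (m : ℕ) (R : Fin m → Finset ι) (hRsub : ∀ j, R j ⊆ Vk)
    (hdisj : ∀ j j', j ≠ j' → Disjoint (R j) (R j'))
    (hcap : ∀ j, ∑ i ∈ R j, q i ≤ Q)
    (hserv : α * ∑ i ∈ Vk, s i ≤ ∑ i ∈ Finset.univ.biUnion R, s i) :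
    ⌈Z / Q⌉ ≤ (m : ℤ) :=
  routes_lower_bound_general Vk q s α Q hQ Z hZ m R hRsub hdisj hcap hserv
end

section
/- Validity of the group capacity cut (Equation 16): let V_k be a finite set of customers with demands q_i ≥ 0 and weights s_i ≥ 0, let α ∈ ℝ, Q > 0, and let Z = min{ ∑_{i∈T} q_i : T ⊆ V_k, ∑_{i∈T} s_i ≥ α·∑_{i∈V_k} s_i } (assumed to exist). Consider m closed walks, each starting and ending at a depot vertex v₀ ∉ V_k, whose sets of visited customers within V_k are pairwise disjoint, such that for every walk the total demand of its visited V_k-customers is at most Q, and the union of the visited V_k-customers has total weight at least α·∑_{i∈V_k} s_i. Then the total number, summed over all m walks, of consecutive steps (u_t, u_{t+1}) with exactly one endpoint in V_k is at least 2·⌈Z/Q⌉. -/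
open Classical

/-!
A walk that visits `Vk` starts and ends at the depot outside `Vk`, so it must enter `Vk`
at some step and leave it at a later step: it contributes at least two boundary steps.
On the other hand the customers of `Vk` visited by all walks attain the service level, so
by minimality of `Z` their total demand, which is at most `Q` per walk visiting `Vk`, is at
least `Z`; hence at least `⌈Z / Q⌉` walks visit `Vk`.
-/

open Finset

theorem Nat.exists_not_and_succ_of_le {p : ℕ → Prop} {a b : ℕ} (hab : a ≤ b) (ha : ¬p a)
    (hb : p b) : ∃ t, a ≤ t ∧ t < b ∧ ¬p t ∧ p (t + 1) := by
  induction b, hab using Nat.le_induction with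
  | base => exact absurd hb ha
  | succ n han ih =>
    by_cases hn : p n
    · obtain ⟨t, hat, htn, ht, ht'⟩ := ih hn
      exact ⟨t, hat, htn.trans n.lt_succ_self, ht, ht'⟩
    · exact ⟨n, han, n.lt_succ_self, hn, hb⟩

theorem Nat.two_le_card_filter_crossing (p : ℕ → Prop) [DecidablePred p] {n t : ℕ}
    (h₀ : ¬p 0) (hn : ¬p n) (ht : p t) (htn : t ≤ n) :
    2 ≤ #{u ∈ range n | (p u ∧ ¬p (u + 1)) ∨ (¬p u ∧ p (u + 1))} := by
  obtain ⟨t₁, -, ht₁, hin₁, hin₁'⟩ := Nat.exists_not_and_succ_of_le t.zero_le h₀ ht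
  obtain ⟨t₂, ht₂, ht₂n, hout₂, hout₂'⟩ :=
    Nat.exists_not_and_succ_of_le (p := fun u => ¬p u) htn (not_not_intro ht) hn
  refine one_lt_card.2 ⟨t₁, ?_, t₂, ?_, by omega⟩
  · exact mem_filter.2 ⟨mem_range.2 (by omega), .inr ⟨hin₁, hin₁'⟩⟩
  · exact mem_filter.2 ⟨mem_range.2 ht₂n, .inl ⟨not_not.1 hout₂, hout₂'⟩⟩

theorem Finset.sum_biUnion_le_card_filter_nonempty_nsmul {ι V R : Type*} [DecidableEq V]
    [AddCommMonoid R] [PartialOrder R] [IsOrderedAddMonoid R] {s : Finset ι} {F : ι → Finset V}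
    {f : V → R} {Q : R} (hF : (s : Set ι).PairwiseDisjoint F) (hQ : ∀ j ∈ s, ∑ i ∈ F j, f i ≤ Q) :
    ∑ i ∈ s.biUnion F, f i ≤ #{j ∈ s | (F j).Nonempty} • Q := by
  rw [sum_biUnion hF, ← sum_filter_of_ne (p := fun j => (F j).Nonempty)]
  · exact sum_le_card_nsmul _ _ _ fun j hj => hQ j (mem_filter.1 hj).1
  · intro j _ hj
    exact nonempty_iff_ne_empty.2 fun hempty => hj (by rw [hempty, sum_empty])

theorem group_capacity_cut_general {V : Type*} [DecidableEq V]
    (v₀ : V) (Vk : Finset V) (hdepot : v₀ ∉ Vk)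
    (q s : V → ℝ)
    (α : ℝ) (Q : ℝ) (hQ : 0 < Q) (Z : ℝ)
    (hZ : IsLeast {x : ℝ | ∃ T ⊆ Vk,
        α * ∑ i ∈ Vk, s i ≤ ∑ i ∈ T, s i ∧ x = ∑ i ∈ T, q i} Z)
    (m : ℕ) (Len : Fin m → ℕ) (w : Fin m → ℕ → V)
    (hstart : ∀ j, w j 0 = v₀) (hend : ∀ j, w j (Len j + 1) = v₀)
    -- `Vis j` : the customers of `Vk` visited by walk `j`
    (Vis : Fin m → Finset V)
    (hVis : ∀ j, Vis j = Vk.filter (fun i => ∃ t ∈ Finset.Icc 1 (Len j), w j t = i))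
    (hdisj : ∀ j j', j ≠ j' → Disjoint (Vis j) (Vis j'))
    (hcap : ∀ j, ∑ i ∈ Vis j, q i ≤ Q)
    (hserv : α * ∑ i ∈ Vk, s i ≤ ∑ i ∈ Finset.univ.biUnion Vis, s i) :
    2 * ⌈Z / Q⌉ ≤
      (∑ j, ((Finset.range (Len j + 1)).filter
        (fun t => (w j t ∈ Vk ∧ w j (t + 1) ∉ Vk) ∨
                  (w j t ∉ Vk ∧ w j (t + 1) ∈ Vk))).card : ℤ) := by
  have hmem : ∀ j i, i ∈ Vis j ↔ i ∈ Vk ∧ ∃ t ∈ Icc 1 (Len j), w j t = i := fun j i => by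
    simp only [hVis j, mem_filter]
  set active : Finset (Fin m) := {j | (Vis j).Nonempty}
  have hZ_le : Z ≤ #active * Q := by
    have hsub : univ.biUnion Vis ⊆ Vk := biUnion_subset.2 fun j _ i hi => ((hmem j i).1 hi).1
    refine (hZ.2 ⟨_, hsub, hserv, rfl⟩).trans ?_
    simpa only [nsmul_eq_mul] using sum_biUnion_le_card_filter_nonempty_nsmul
      (fun j _ j' _ h => hdisj j j' h) fun j _ => hcap j
  have hceil : ⌈Z / Q⌉ ≤ #active := Int.ceil_le.2 ((div_le_iff₀ hQ).2 hZ_le)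
  have hcross : ∀ j ∈ active, 2 ≤ #{t ∈ range (Len j + 1) |
      (w j t ∈ Vk ∧ w j (t + 1) ∉ Vk) ∨ (w j t ∉ Vk ∧ w j (t + 1) ∈ Vk)} := by
    intro j hj
    obtain ⟨i, hi⟩ := (mem_filter.1 hj).2
    obtain ⟨hiVk, t, ht, rfl⟩ := (hmem j i).1 hi
    exact Nat.two_le_card_filter_crossing (fun u => w j u ∈ Vk) (hstart j ▸ hdepot)
      (hend j ▸ hdepot) hiVk ((mem_Icc.1 ht).2.trans (Nat.le_succ _))
  have htotal := (card_nsmul_le_sum active _ 2 hcross).trans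
    (sum_le_sum_of_subset (filter_subset _ univ))
  rw [smul_eq_mul, mul_comm] at htotal
  calc 2 * ⌈Z / Q⌉ ≤ 2 * (#active : ℤ) := by omega
    _ ≤ _ := by exact_mod_cast htotal

/-- Validity of the group capacity cut (Equation 16): given `m` closed walks starting
and ending at the depot `v₀ ∉ Vk`, with pairwise disjoint sets of visited customers
of `Vk`, each walk carrying a total `Vk`-demand at most `Q`, and jointly attaining the
service level, the total number of steps with exactly one endpoint in `Vk`, summed over
the walks, is at least `2 ⌈Z / Q⌉`, where `Z` is the minimum total demand of a subset of
`Vk` attaining the service level. -/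
theorem group_capacity_cut {V : Type*} [DecidableEq V]
    (v₀ : V) (Vk : Finset V) (hdepot : v₀ ∉ Vk)
    (q s : V → ℝ) (hq : ∀ i ∈ Vk, 0 ≤ q i) (hs : ∀ i ∈ Vk, 0 ≤ s i)
    (α : ℝ) (Q : ℝ) (hQ : 0 < Q) (Z : ℝ)
    (hZ : IsLeast {x : ℝ | ∃ T ⊆ Vk,
        α * ∑ i ∈ Vk, s i ≤ ∑ i ∈ T, s i ∧ x = ∑ i ∈ T, q i} Z)
    (m : ℕ) (Len : Fin m → ℕ) (w : Fin m → ℕ → V)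
    (hstart : ∀ j, w j 0 = v₀) (hend : ∀ j, w j (Len j + 1) = v₀)
    -- `Vis j` : the customers of `Vk` visited by walk `j`
    (Vis : Fin m → Finset V)
    (hVis : ∀ j, Vis j = Vk.filter (fun i => ∃ t ∈ Finset.Icc 1 (Len j), w j t = i))
    (hdisj : ∀ j j', j ≠ j' → Disjoint (Vis j) (Vis j'))
    (hcap : ∀ j, ∑ i ∈ Vis j, q i ≤ Q)
    (hserv : α * ∑ i ∈ Vk, s i ≤ ∑ i ∈ Finset.univ.biUnion Vis, s i) :
    2 * ⌈Z / Q⌉ ≤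
      (∑ j, ((Finset.range (Len j + 1)).filter
        (fun t => (w j t ∈ Vk ∧ w j (t + 1) ∉ Vk) ∨
                  (w j t ∉ Vk ∧ w j (t + 1) ∈ Vk))).card : ℤ) :=
  group_capacity_cut_general v₀ Vk hdepot q s α Q hQ Z hZ m Len w hstart hend Vis hVis hdisj hcap
    hserv
end
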